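/- Every d×d complex matrix M that is both unitary and symmetric (M = Mᵀ) can be written as M = O D Oᵀ, where O is a d×d real orthogonal matrix (regarded as a complex matrix) and D is a diagonal unitary matrix, i.e., a diagonal complex matrix all of whose diagonal entries have modulus 1. -/

import Mathlib

/-!
Write `M = A + i B` with `A`, `B` real. Symmetry makes `A` and `B` symmetric and turns `star M`
into the entrywise conjugate `A - i B`; since a unitary commutes with its adjoint, `A` commutes
with `B`. Commuting real symmetric matrices are diagonalized by a single real orthogonal `O`,
and then `D = Oᵀ M O` is diagonal, and unitary as a product of unitaries.
-/

open Matrix Module Module.End ComplexConjugate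

namespace LinearMap.IsSymmetric

variable {𝕜 E : Type*} [RCLike 𝕜] [NormedAddCommGroup E] [InnerProductSpace 𝕜 E]
  [FiniteDimensional 𝕜 E] {A B : E →ₗ[𝕜] E}

theorem exists_orthonormalBasis_common_eigenvectors {n : ℕ} (hn : finrank 𝕜 E = n)
    (hA : A.IsSymmetric) (hB : B.IsSymmetric) (hAB : Commute A B) :
    ∃ (b : OrthonormalBasis (Fin n) 𝕜 E) (a c : Fin n → 𝕜),
      ∀ k, A (b k) = a k • b k ∧ B (b k) = c k • b k := by
  classical
  let V : 𝕜 × 𝕜 → Submodule 𝕜 E := fun p => eigenspace A p.2 ⊓ eigenspace B p.1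
  have hV : DirectSum.IsInternal V := directSum_isInternal_of_commute hA hB hAB
  have : Fintype {p // V p ≠ ⊥} :=
    (WellFoundedGT.finite_ne_bot_of_iSupIndep hV.submodule_iSupIndep).fintype
  have hV' : DirectSum.IsInternal fun p : {p // V p ≠ ⊥} => V p :=
    DirectSum.isInternal_ne_bot_iff.mpr hV
  have hOF :
      OrthogonalFamily 𝕜 (fun p : {p // V p ≠ ⊥} => V p) fun p => (V p).subtypeₗᵢ :=
    (orthogonalFamily_eigenspace_inf_eigenspace hA hB).comp Subtype.coe_injective
  let p k := (hV'.subordinateOrthonormalBasisIndex hn k hOF).1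
  refine ⟨hV'.subordinateOrthonormalBasis hn hOF, fun k => (p k).2, fun k => (p k).1,
    fun k => ?_⟩
  have hk := hV'.subordinateOrthonormalBasis_subordinate hn k hOF
  exact ⟨mem_eigenspace_iff.mp hk.1, mem_eigenspace_iff.mp hk.2⟩

end LinearMap.IsSymmetric

namespace Matrix

variable {n : Type*}

theorem mul_eq_mul_diagonal_of_mulVec_col [Fintype n] [DecidableEq n] {R : Type*} [CommRing R]
    {A O : Matrix n n R} {a : n → R} (h : ∀ k, A *ᵥ O.col k = a k • O.col k) :
    A * O = O * diagonal a := by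
  ext i k
  rw [mul_diagonal, mul_comm]
  exact congrFun (h k) i

theorem IsSymm.exists_orthogonal_mul_diagonal_of_commute [Fintype n] [DecidableEq n]
    {A B : Matrix n n ℝ} (hA : A.IsSymm) (hB : B.IsSymm) (hAB : Commute A B) :
    ∃ O ∈ orthogonalGroup n ℝ, ∃ a b : n → ℝ,
      A * O = O * diagonal a ∧ B * O = O * diagonal b := by
  have hsymm {X : Matrix n n ℝ} (hX : X.IsSymm) : (toEuclideanLin X).IsSymmetric :=
    isSymmetric_toEuclideanLin_iff.mpr <| by simpa [IsHermitian, IsSymm] using hX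
  have hcomm : Commute (toEuclideanLin A) (toEuclideanLin B) := by
    simpa [Commute, SemiconjBy, Module.End.mul_eq_comp, ← toLpLin_mul_same] using
      congrArg toEuclideanLin hAB.eq
  obtain ⟨b, a, c, hb⟩ := (hsymm hA).exists_orthonormalBasis_common_eigenvectors
    finrank_euclideanSpace (hsymm hB) hcomm
  let e := Fintype.equivOfCardEq (Fintype.card_fin (Fintype.card n))
  let b' := b.reindex e
  have hcol k : ((EuclideanSpace.basisFun n ℝ).toBasis.toMatrix b').col k = b (e.symm k) := by
    ext i
    simp [col_apply, Basis.toMatrix_apply, b']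
  refine ⟨_, (EuclideanSpace.basisFun n ℝ).toMatrix_orthonormalBasis_mem_orthogonal b',
    a ∘ e.symm, c ∘ e.symm, ?_, ?_⟩ <;> apply mul_eq_mul_diagonal_of_mulVec_col <;> intro k
  · simpa [hcol] using congrArg WithLp.ofLp (hb (e.symm k)).1
  · simpa [hcol] using congrArg WithLp.ofLp (hb (e.symm k)).2

theorem map_re_map_ofReal (M : Matrix n n ℂ) :
    (M.map Complex.re).map Complex.ofReal = (2 : ℂ)⁻¹ • (M + M.map conj) := by
  ext i j
  simp [Complex.re_eq_add_conj, div_eq_inv_mul]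

theorem map_im_map_ofReal (M : Matrix n n ℂ) :
    (M.map Complex.im).map Complex.ofReal = (2 * Complex.I)⁻¹ • (M - M.map conj) := by
  ext i j
  simp [Complex.im_eq_sub_conj, div_eq_inv_mul]

theorem map_re_add_I_smul_map_im (M : Matrix n n ℂ) :
    (M.map Complex.re).map Complex.ofReal + Complex.I • (M.map Complex.im).map Complex.ofReal
      = M := by
  ext i j
  simp [mul_comm Complex.I]

theorem commute_map_re_map_im [Fintype n] [DecidableEq n] {M : Matrix n n ℂ}
    (h : Commute M (M.map conj)) : Commute (M.map Complex.re) (M.map Complex.im) := by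
  refine Commute.of_map (f := Complex.ofRealHom.mapMatrix)
    (map_injective Complex.ofReal_injective) ?_
  have hsum : Commute (M + M.map conj) (M - M.map conj) :=
    ((Commute.refl M).sub_right h).add_left (h.symm.sub_right (Commute.refl _))
  change Commute ((M.map Complex.re).map Complex.ofReal) ((M.map Complex.im).map Complex.ofReal)
  rw [map_re_map_ofReal, map_im_map_ofReal]
  exact (hsum.smul_left _).smul_right _

theorem IsSymm.star_eq_map_conj {M : Matrix n n ℂ} (hM : M.IsSymm) : star M = M.map conj := by
  ext i j
  simp [hM.apply i j]

theorem star_map_ofReal (O : Matrix n n ℝ) :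
    star (O.map Complex.ofReal) = (O.map Complex.ofReal)ᵀ := by
  ext i j
  simp

theorem map_ofReal_mem_unitaryGroup [Fintype n] [DecidableEq n] {O : Matrix n n ℝ}
    (hO : O ∈ orthogonalGroup n ℝ) : O.map Complex.ofReal ∈ unitaryGroup n ℂ := by
  rw [mem_unitaryGroup_iff, star_map_ofReal, ← transpose_map]
  calc O.map Complex.ofReal * Oᵀ.map Complex.ofReal = (O * Oᵀ).map Complex.ofRealHom :=
        (Matrix.map_mul (f := Complex.ofRealHom)).symm
    _ = 1 := by simp [(mem_orthogonalGroup_iff n ℝ).mp hO]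

theorem IsDiag.norm_apply_self_of_mem_unitaryGroup [Fintype n] [DecidableEq n] {𝕜 : Type*}
    [RCLike 𝕜] {D : Matrix n n 𝕜} (hD : D.IsDiag) (hU : D ∈ unitaryGroup n 𝕜) (i : n) :
    ‖D i i‖ = 1 := by
  rw [hD.diagonal_diag.symm, mem_unitaryGroup_iff', star_eq_conjTranspose,
    diagonal_conjTranspose, diagonal_mul_diagonal, ← diagonal_one, diagonal_eq_diagonal_iff] at hU
  exact CStarRing.norm_of_mem_unitary (Unitary.mem_iff_star_mul_self.mpr (hU i))

end Matrix

/-- **Diagonalization of symmetric unitaries by real orthogonal matrices.**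
Every `d×d` complex matrix `M` that is both unitary and symmetric (`M = Mᵀ`) can be
written as `M = O D Oᵀ` with `O` real orthogonal and `D` a diagonal unitary. -/
theorem symmetric_unitary_orthogonal_diagonalization
    (d : ℕ) (M : Matrix (Fin d) (Fin d) ℂ)
    (hM : M ∈ Matrix.unitaryGroup (Fin d) ℂ) (hsymm : M = Mᵀ) :
    ∃ (O : Matrix (Fin d) (Fin d) ℝ) (D : Matrix (Fin d) (Fin d) ℂ),
      O ∈ Matrix.orthogonalGroup (Fin d) ℝ ∧
      D.IsDiag ∧ (∀ i, ‖D i i‖ = 1) ∧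
      M = O.map Complex.ofReal * D * (O.map Complex.ofReal)ᵀ := by
  have hM' : M.IsSymm := hsymm.symm
  have hnormal : Commute M (M.map conj) := by
    rw [← hM'.star_eq_map_conj]
    exact (Unitary.mul_star_self_of_mem hM).trans (Unitary.star_mul_self_of_mem hM).symm
  obtain ⟨O, hO, a, b, ha, hb⟩ := (hM'.map Complex.re).exists_orthogonal_mul_diagonal_of_commute
    (hM'.map Complex.im) (commute_map_re_map_im hnormal)
  let φ := Complex.ofRealHom.mapMatrix (m := Fin d)
  let D := φ (diagonal a) + Complex.I • φ (diagonal b)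
  have hMO : M * φ O = φ O * D := by
    rw [← map_re_add_I_smul_map_im M]
    change (φ (M.map Complex.re) + Complex.I • φ (M.map Complex.im)) * φ O = _
    rw [add_mul, smul_mul_assoc, ← map_mul, ← map_mul, ha, hb, map_mul, map_mul, mul_add,
      mul_smul_comm]
  have hU : φ O ∈ unitaryGroup (Fin d) ℂ := map_ofReal_mem_unitaryGroup hO
  have hDU : D ∈ unitaryGroup (Fin d) ℂ := by
    have hD : D = star (φ O) * M * φ O := by
      rw [mul_assoc, hMO, ← mul_assoc, Unitary.star_mul_self_of_mem hU, one_mul]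
    exact hD ▸ mul_mem (mul_mem (Unitary.star_mem hU) hM) hU
  have hDdiag : D.IsDiag := ((isDiag_diagonal a).map rfl).add (((isDiag_diagonal b).map rfl).smul _)
  refine ⟨O, D, hO, hDdiag, hDdiag.norm_apply_self_of_mem_unitaryGroup hDU, ?_⟩
  calc M = M * (φ O * star (φ O)) := by rw [Unitary.mul_star_self_of_mem hU, mul_one]
    _ = φ O * D * star (φ O) := by rw [← mul_assoc, hMO]
    _ = O.map Complex.ofReal * D * (O.map Complex.ofReal)ᵀ :=
      congrArg (φ O * D * ·) (star_map_ofReal O)
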